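/- arXiv:2506.00616 — 3 statements merged into one kernel-verified Lean document; each statement's English description precedes it below -/
import Mathlib

section
/- The pointwise minimum of finitely many functions of the form Rₖ(x) = log₂(1 + C/(h² + (x − x̂ₖ)² + ŷ²)), k = 1,…,K (all with the same C, h, ŷ), is strictly unimodal: there exists x* such that the minimum is nondecreasing on (−∞, x*] and nonincreasing on [x*, ∞), and x* = (min_k x̂ₖ + max_k x̂ₖ)/2. -/
open Finset

private lemma F_anti (C h yhat : ℝ) (hC : 0 < C) (hh : 0 < h) {s t : ℝ}
    (hs : 0 ≤ s) (hst : s ≤ t) :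
    Real.logb 2 (1 + C / (h ^ 2 + t + yhat ^ 2)) ≤
      Real.logb 2 (1 + C / (h ^ 2 + s + yhat ^ 2)) := by
  have hds : 0 < h ^ 2 + s + yhat ^ 2 := by positivity
  have hdt : 0 < h ^ 2 + t + yhat ^ 2 := by linarith
  have h1 : 0 < 1 + C / (h ^ 2 + t + yhat ^ 2) := by positivity
  apply Real.logb_le_logb_of_le one_lt_two h1
  gcongr

/-- the pointwise minimum of the per-user rates is strictly unimodal with
peak at the midpoint of the extreme user positions. -/
theorem stmt_1 (K : ℕ) (hK : 0 < K) (C h yhat : ℝ) (hC : 0 < C) (hh : 0 < h)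
    (xhat : Fin K → ℝ)
    (hne : (Finset.univ : Finset (Fin K)).Nonempty := Finset.univ_nonempty_iff.mpr ⟨⟨0, hK⟩⟩)
    (Rmc : ℝ → ℝ)
    (hRmc : ∀ x, Rmc x = Finset.univ.inf' hne
        (fun k => Real.logb 2 (1 + C / (h ^ 2 + (x - xhat k) ^ 2 + yhat ^ 2)))) :
    MonotoneOn Rmc (Set.Iic ((Finset.univ.inf' hne xhat + Finset.univ.sup' hne xhat) / 2)) ∧
    AntitoneOn Rmc (Set.Ici ((Finset.univ.inf' hne xhat + Finset.univ.sup' hne xhat) / 2)) := by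
  set m := Finset.univ.inf' hne xhat with hm
  set M := Finset.univ.sup' hne xhat with hM
  obtain ⟨km, -, hkm⟩ := Finset.exists_mem_eq_inf' hne xhat
  obtain ⟨kM, -, hkM⟩ := Finset.exists_mem_eq_sup' hne xhat
  have hmM : m ≤ M := (Finset.inf'_le xhat (Finset.mem_univ km)).trans (Finset.le_sup' xhat (Finset.mem_univ km))
  -- key closed form
  have key : ∀ x, Rmc x =
      Real.logb 2 (1 + C / (h ^ 2 + max ((x - m) ^ 2) ((x - M) ^ 2) + yhat ^ 2)) := by
    intro x
    rw [hRmc x]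
    apply le_antisymm
    · rcases max_cases ((x - m) ^ 2) ((x - M) ^ 2) with ⟨hmax, -⟩ | ⟨hmax, -⟩
      · have := Finset.inf'_le (b := km)
          (fun k => Real.logb 2 (1 + C / (h ^ 2 + (x - xhat k) ^ 2 + yhat ^ 2)))
          (Finset.mem_univ km)
        rw [hmax, hm, hkm]
        exact this
      · have := Finset.inf'_le (b := kM)
          (fun k => Real.logb 2 (1 + C / (h ^ 2 + (x - xhat k) ^ 2 + yhat ^ 2)))
          (Finset.mem_univ kM)
        rw [hmax, hM, hkM]
        exact this
    · apply Finset.le_inf'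
      intro k _
      apply F_anti C h yhat hC hh (sq_nonneg _)
      have h1 : m ≤ xhat k := Finset.inf'_le xhat (Finset.mem_univ k)
      have h2 : xhat k ≤ M := Finset.le_sup' xhat (Finset.mem_univ k)
      rcases le_total (xhat k) x with hc | hc
      · refine le_trans ?_ (le_max_left _ _)
        nlinarith
      · refine le_trans ?_ (le_max_right _ _)
        nlinarith
  constructor
  · intro a ha b hb hab
    simp only [Set.mem_Iic] at ha hb
    rw [key a, key b]
    apply F_anti C h yhat hC hh (le_max_iff.mpr (Or.inl (sq_nonneg _)))
    have hbmax : max ((b - m) ^ 2) ((b - M) ^ 2) = (b - M) ^ 2 := by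
      apply max_eq_right; nlinarith
    rw [hbmax]
    refine le_trans ?_ (le_max_right _ _)
    nlinarith
  · intro a ha b hb hab
    simp only [Set.mem_Ici] at ha hb
    rw [key a, key b]
    apply F_anti C h yhat hC hh (le_max_iff.mpr (Or.inl (sq_nonneg _)))
    have hamax : max ((a - m) ^ 2) ((a - M) ^ 2) = (a - m) ^ 2 := by
      apply max_eq_left; nlinarith
    rw [hamax]
    refine le_trans ?_ (le_max_left _ _)
    nlinarith
end

section
/- For real numbers x̂₁ ≤ … ≤ x̂_K, the maximum over x ∈ ℝ of the multicast rate R_mc(x) = min_k log₂(1 + C/(h² + ŷ² + (x − x̂ₖ)²)) equals log₂(1 + C/(Δ²/4 + h² + ŷ²)), where Δ = x̂_K − x̂₁, and it is attained at x = (x̂₁ + x̂_K)/2. -/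
open Finset

lemma aux_mono (C h yhat : ℝ) (hC : 0 < C) (hh : 0 < h) {d e : ℝ} (hd : 0 ≤ d) (hde : d ≤ e) :
    Real.logb 2 (1 + C / (h ^ 2 + yhat ^ 2 + e)) ≤ Real.logb 2 (1 + C / (h ^ 2 + yhat ^ 2 + d)) := by
  have h1 : 0 < h ^ 2 + yhat ^ 2 + d := by positivity
  have h2 : 0 < h ^ 2 + yhat ^ 2 + e := by linarith
  have hdiv : C / (h ^ 2 + yhat ^ 2 + e) ≤ C / (h ^ 2 + yhat ^ 2 + d) :=
    div_le_div_of_nonneg_left hC.le h1 (by linarith)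
  have hp : (0:ℝ) < 1 + C / (h ^ 2 + yhat ^ 2 + e) := by positivity
  exact Real.logb_le_logb_of_le one_lt_two hp (by linarith)

/-- the maximum multicast rate equals `log₂(1 + C/(Δ²/4 + h² + ŷ²))`,
attained at the midpoint `x = (x̂₁ + x̂_K)/2`, where `Δ = x̂_K − x̂₁`. -/
theorem stmt_3 (K : ℕ) (hK : 0 < K) (C h yhat : ℝ) (hC : 0 < C) (hh : 0 < h)
    (xhat : Fin K → ℝ) (hmono : Monotone xhat)
    (hne : (Finset.univ : Finset (Fin K)).Nonempty := Finset.univ_nonempty_iff.mpr ⟨⟨0, hK⟩⟩)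
    (Rmc : ℝ → ℝ)
    (hRmc : ∀ x, Rmc x = Finset.univ.inf' hne
        (fun k => Real.logb 2 (1 + C / (h ^ 2 + yhat ^ 2 + (x - xhat k) ^ 2)))) :
    Rmc ((xhat ⟨0, hK⟩ + xhat ⟨K - 1, Nat.sub_lt hK one_pos⟩) / 2)
        = Real.logb 2 (1 + C /
            ((xhat ⟨K - 1, Nat.sub_lt hK one_pos⟩ - xhat ⟨0, hK⟩) ^ 2 / 4 + h ^ 2 + yhat ^ 2)) ∧
    ∀ x, Rmc x ≤ Rmc ((xhat ⟨0, hK⟩ + xhat ⟨K - 1, Nat.sub_lt hK one_pos⟩) / 2) := by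
  set i0 : Fin K := ⟨0, hK⟩ with hi0
  set iK : Fin K := ⟨K - 1, Nat.sub_lt hK one_pos⟩ with hiK
  set a := xhat i0 with ha
  set b := xhat iK with hb
  set m := (a + b) / 2 with hm
  have hbounds : ∀ k : Fin K, a ≤ xhat k ∧ xhat k ≤ b := by
    intro k
    constructor
    · exact hmono (by simp [hi0, Fin.le_def])
    · exact hmono (by simp [hiK, Fin.le_def]; exact Nat.le_pred_of_lt k.2)
  have hab : a ≤ b := (hbounds i0).2
  have htarget : (h ^ 2 + yhat ^ 2 + (b - a) ^ 2 / 4) = ((b - a) ^ 2 / 4 + h ^ 2 + yhat ^ 2) := by ring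
  -- value at midpoint
  have hval : Rmc m = Real.logb 2 (1 + C / ((b - a) ^ 2 / 4 + h ^ 2 + yhat ^ 2)) := by
    rw [hRmc m]
    apply le_antisymm
    · refine (Finset.inf'_le _ (Finset.mem_univ iK)).trans ?_
      have : (m - xhat iK) ^ 2 = (b - a) ^ 2 / 4 := by rw [← hb, hm]; ring
      rw [this, ← htarget]
    · rw [Finset.le_inf'_iff]
      intro k _
      rw [← htarget]
      refine aux_mono C h yhat hC hh (by positivity) ?_
      obtain ⟨h1, h2⟩ := hbounds k
      nlinarith [sq_nonneg (m - xhat k)]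
  refine ⟨hval, ?_⟩
  intro x
  rw [hval, hRmc x]
  rcases le_total x m with hx | hx
  · refine (Finset.inf'_le _ (Finset.mem_univ iK)).trans ?_
    rw [← htarget]
    refine aux_mono C h yhat hC hh (by positivity) ?_
    nlinarith
  · refine (Finset.inf'_le _ (Finset.mem_univ i0)).trans ?_
    rw [← htarget]
    refine aux_mono C h yhat hC hh (by positivity) ?_
    nlinarith
end

section
/- Let σ > 0 and R(g) = log₂(1 + |g|²/σ²) for g ∈ ℂ. Then for any g⁰ ∈ ℂ and all g ∈ ℂ, log₂(1 + |g|²/σ²) ≥ log₂(1 + |g⁰|²/σ²) + (2Re{ḡ⁰ g} − 2|g⁰|²)/(ln 2 · σ²) − |g⁰|²(|g|² − |g⁰|²)/(ln 2 · σ²(σ² + |g⁰|²)), with equality at g = g⁰. -/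
/-- MM minorizer of the rate `R(g) = log₂(1 + |g|²/σ²)`:
for any expansion point `g⁰`, the concave quadratic surrogate is a global lower bound
on `R`, tight at `g = g⁰`. -/
theorem stmt_14 (σ : ℝ) (hσ : 0 < σ) (g0 : ℂ) :
    (∀ g : ℂ,
      Real.logb 2 (1 + ‖g0‖ ^ 2 / σ ^ 2)
        + (2 * ((starRingEnd ℂ) g0 * g).re - 2 * ‖g0‖ ^ 2) / (Real.log 2 * σ ^ 2)
        - ‖g0‖ ^ 2 * (‖g‖ ^ 2 - ‖g0‖ ^ 2)
            / (Real.log 2 * σ ^ 2 * (σ ^ 2 + ‖g0‖ ^ 2))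
      ≤ Real.logb 2 (1 + ‖g‖ ^ 2 / σ ^ 2)) ∧
    Real.logb 2 (1 + ‖g0‖ ^ 2 / σ ^ 2)
        + (2 * ((starRingEnd ℂ) g0 * g0).re - 2 * ‖g0‖ ^ 2) / (Real.log 2 * σ ^ 2)
        - ‖g0‖ ^ 2 * (‖g0‖ ^ 2 - ‖g0‖ ^ 2)
            / (Real.log 2 * σ ^ 2 * (σ ^ 2 + ‖g0‖ ^ 2))
      = Real.logb 2 (1 + ‖g0‖ ^ 2 / σ ^ 2) := by
  have hs : (0:ℝ) < σ ^ 2 := by positivity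
  have hlog2 : (0:ℝ) < Real.log 2 := Real.log_pos (by norm_num)
  constructor
  · intro g
    set s : ℝ := σ ^ 2 with hs_def
    set a : ℝ := ‖g0‖ with ha_def
    set b : ℝ := ‖g‖ with hb_def
    set t : ℝ := ((starRingEnd ℂ) g0 * g).re with ht_def
    have ha : 0 ≤ a := norm_nonneg g0
    have hb : 0 ≤ b := norm_nonneg g
    have ht : t ≤ a * b := by
      calc t ≤ ‖(starRingEnd ℂ) g0 * g‖ := Complex.re_le_norm _
        _ = a * b := by rw [norm_mul, Complex.norm_conj]
    have h1 : (0:ℝ) < s + a ^ 2 := by positivity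
    have h2 : (0:ℝ) < s + b ^ 2 := by positivity
    -- log bound: log(1+b²/s) − log(1+a²/s) ≥ (b²−a²)/(s+b²)
    have hkey : (b ^ 2 - a ^ 2) / (s + b ^ 2)
        ≤ Real.logb 2 (1 + b ^ 2 / s) * Real.log 2
          - Real.logb 2 (1 + a ^ 2 / s) * Real.log 2 := by
      have e1 : Real.logb 2 (1 + a ^ 2 / s) * Real.log 2 = Real.log (1 + a ^ 2 / s) := by
        rw [Real.logb]; field_simp
      have e2 : Real.logb 2 (1 + b ^ 2 / s) * Real.log 2 = Real.log (1 + b ^ 2 / s) := by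
        rw [Real.logb]; field_simp
      rw [e1, e2]
      have hq : (0:ℝ) < (1 + a ^ 2 / s) / (1 + b ^ 2 / s) := by positivity
      have := Real.log_le_sub_one_of_pos hq
      rw [Real.log_div (by positivity) (by positivity)] at this
      have heq : (1 + a ^ 2 / s) / (1 + b ^ 2 / s) = (s + a ^ 2) / (s + b ^ 2) := by
        field_simp
      rw [heq] at this
      have : Real.log (1 + a ^ 2 / s) - Real.log (1 + b ^ 2 / s)
          ≤ (s + a ^ 2) / (s + b ^ 2) - 1 := this
      have h3 : (s + a ^ 2) / (s + b ^ 2) - 1 = -((b ^ 2 - a ^ 2) / (s + b ^ 2)) := by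
        field_simp
        ring
      linarith [this, h3]
    -- polynomial bound
    have hpoly : (2 * t - 2 * a ^ 2) / s - a ^ 2 * (b ^ 2 - a ^ 2) / (s * (s + a ^ 2))
        ≤ (b ^ 2 - a ^ 2) / (s + b ^ 2) := by
      rw [div_sub_div _ _ (ne_of_gt hs) (by positivity), div_le_div_iff₀ (by positivity) h2]
      nlinarith [sq_nonneg ((b - a) * (s - a * b)),
        mul_nonneg (mul_nonneg (mul_nonneg (sub_nonneg.2 ht) hs.le) h1.le) h2.le,
        mul_pos hs h1, mul_pos h1 h2, sq_nonneg (b - a), sq_nonneg (s - a * b)]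
    -- combine
    have hsum : Real.logb 2 (1 + a ^ 2 / s) * Real.log 2
        + ((2 * t - 2 * a ^ 2) / s - a ^ 2 * (b ^ 2 - a ^ 2) / (s * (s + a ^ 2)))
        ≤ Real.logb 2 (1 + b ^ 2 / s) * Real.log 2 := by linarith
    calc Real.logb 2 (1 + a ^ 2 / s)
          + (2 * t - 2 * a ^ 2) / (Real.log 2 * s)
          - a ^ 2 * (b ^ 2 - a ^ 2) / (Real.log 2 * s * (s + a ^ 2))
        = (Real.logb 2 (1 + a ^ 2 / s) * Real.log 2
            + ((2 * t - 2 * a ^ 2) / s - a ^ 2 * (b ^ 2 - a ^ 2) / (s * (s + a ^ 2))))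
            / Real.log 2 := by
          field_simp
          ring
      _ ≤ (Real.logb 2 (1 + b ^ 2 / s) * Real.log 2) / Real.log 2 := by gcongr
      _ = Real.logb 2 (1 + b ^ 2 / s) := by
          rw [mul_div_assoc, div_self (ne_of_gt hlog2), mul_one]
  · have hre : ((starRingEnd ℂ) g0 * g0).re = ‖g0‖ ^ 2 := by
      have : (starRingEnd ℂ) g0 * g0 = (Complex.normSq g0 : ℂ) := by
        rw [mul_comm, Complex.mul_conj]
      rw [this, Complex.ofReal_re, Complex.normSq_eq_norm_sq]
    rw [hre]
    simp
end
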